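/- (Existence and uniqueness of the standard basis.) Let A be an integral domain with fraction field K, M a nonzero submodule of A[[x]]^p, (α_i,j_i), i = 1,…,q, the vertices of N(M), Φ_i ∈ M with exp Φ_i = (α_i,j_i), Δ_1,…,Δ_q,Δ the associated partition of ℕ^n×{1,…,p}, and S the multiplicative subset of A generated by the initial coefficients of Φ_1,…,Φ_q. Then there exist unique Ψ_1,…,Ψ_q in the S^{-1}A[[x]]-submodule S^{-1}A[[x]]·M of S^{-1}A[[x]]^p generated by M such that Ψ_i = x^{(α_i,j_i)} + R_i with supp R_i ⊆ Δ for each i; moreover Ψ_1,…,Ψ_q generate S^{-1}A[[x]]·M. -/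

import Mathlib

namespace QDiv

/-- Index set ℕ^n × {1,…,p}. -/
abbrev Idx (n p : ℕ) := (Fin n →₀ ℕ) × Fin p

variable {n p q : ℕ}

/-- Value of the positive linear form `L` on a multi-index. -/
noncomputable def lval (L : Fin n → ℝ) (α : Fin n →₀ ℕ) : ℝ := ∑ i, L i * (α i : ℝ)

/-- Lexicographic order on multi-indices. -/
def mlexLt (a b : Fin n →₀ ℕ) : Prop := ∃ i : Fin n, (∀ j < i, a j = b j) ∧ a i < b i

/-- The order on `ℕ^n` given by comparing `(L α, α)` lexicographically. -/
def sLt (L : Fin n → ℝ) (a b : Fin n →₀ ℕ) : Prop :=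
  lval L a < lval L b ∨ (lval L a = lval L b ∧ mlexLt a b)

/-- The total order on `ℕ^n × {1,…,p}` given by comparing `(L α, j, α)` lexicographically. -/
def idxLt (L : Fin n → ℝ) (a b : Idx n p) : Prop :=
  lval L a.1 < lval L b.1 ∨
    (lval L a.1 = lval L b.1 ∧ (a.2 < b.2 ∨ (a.2 = b.2 ∧ mlexLt a.1 b.1)))

def idxLe (L : Fin n → ℝ) (a b : Idx n p) : Prop := ¬ idxLt L b a

section CommRing

variable {A : Type*} [CommRing A]

/-- The support of a `p`-tuple of formal power series. -/
def suppT (F : Fin p → MvPowerSeries (Fin n) A) : Set (Idx n p) :=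
  {e | MvPowerSeries.coeff e.1 (F e.2) ≠ 0}

/-- The support of a single formal power series. -/
def suppS (f : MvPowerSeries (Fin n) A) : Set (Fin n →₀ ℕ) :=
  {α | MvPowerSeries.coeff α f ≠ 0}

/-- `e` is the initial exponent `exp F` of the tuple `F`. -/
def IsExp (L : Fin n → ℝ) (F : Fin p → MvPowerSeries (Fin n) A) (e : Idx n p) : Prop :=
  e ∈ suppT F ∧ ∀ d ∈ suppT F, ¬ idxLt L d e

/-- `β` is the initial exponent of the scalar series `f`. -/
def IsExpS (L : Fin n → ℝ) (f : MvPowerSeries (Fin n) A) (β : Fin n →₀ ℕ) : Prop :=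
  β ∈ suppS f ∧ ∀ γ ∈ suppS f, ¬ sLt L γ β

/-- The diagram of initial exponents `N(M)` of a submodule `M ⊆ A[[x]]^p`. -/
def diagram (L : Fin n → ℝ)
    (M : Submodule (MvPowerSeries (Fin n) A) (Fin p → MvPowerSeries (Fin n) A)) :
    Set (Idx n p) :=
  {e | ∃ F ∈ M, IsExp L F e}

/-- `N + ℕ^n`. -/
def shift (N : Set (Idx n p)) : Set (Idx n p) :=
  {e | ∃ d ∈ N, ∃ β : Fin n →₀ ℕ, e = (d.1 + β, d.2)}

/-- A vertex of a diagram `N`. -/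
def IsVertex (N : Set (Idx n p)) (e : Idx n p) : Prop :=
  e ∈ N ∧ shift (N \ {e}) ≠ N

/-- The "cone" `(α,j) + ℕ^n` over a single index. -/
def cone (d : Idx n p) : Set (Idx n p) :=
  {e | e.2 = d.2 ∧ ∃ β : Fin n →₀ ℕ, e.1 = d.1 + β}

/-- The pieces `Δ_i` of the partition of `ℕ^n × {1,…,p}` associated with
initial exponents `v 1, …, v q`. -/
def Delta (v : Fin q → Idx n p) (i : Fin q) : Set (Idx n p) :=
  cone (v i) \ ⋃ (k : Fin q) (_ : k < i), cone (v k)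

/-- The remaining piece `Δ` of the partition. -/
def DeltaC (v : Fin q → Idx n p) : Set (Idx n p) := (⋃ i, cone (v i))ᶜ

/-- The monomial tuple `x^{(α,j)}`. -/
noncomputable def xMon (e : Idx n p) : Fin p → MvPowerSeries (Fin n) A := fun j =>
  if j = e.2 then MvPowerSeries.monomial e.1 1 else 0

/-- All coefficients of a scalar series satisfy a predicate `P`
(e.g. membership in a subring of `K`). -/
def coeffsIn (P : A → Prop) (f : MvPowerSeries (Fin n) A) : Prop :=
  ∀ α : Fin n →₀ ℕ, P (MvPowerSeries.coeff α f)

/-- All coefficients of a tuple of series satisfy `P`. -/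
def coeffsInT (P : A → Prop) (F : Fin p → MvPowerSeries (Fin n) A) : Prop :=
  ∀ j, coeffsIn P (F j)

/-- `G` belongs to the `B[[x]]`-submodule of `B[[x]]^p` generated by the set `Mset`,
where `B[[x]]` is the ring of series all of whose coefficients satisfy `P`. -/
def inSpanP (P : A → Prop) (Mset : Set (Fin p → MvPowerSeries (Fin n) A))
    (G : Fin p → MvPowerSeries (Fin n) A) : Prop :=
  ∃ (k : ℕ) (c : Fin k → MvPowerSeries (Fin n) A)
    (m : Fin k → (Fin p → MvPowerSeries (Fin n) A)),
    (∀ l, coeffsIn P (c l)) ∧ (∀ l, m l ∈ Mset) ∧ ∀ j, G j = ∑ l, c l * m l j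

/-- Membership in the image of the localization `S⁻¹A` inside the fraction field `K`. -/
def locMem {K : Type*} [Field K] [Algebra A K] (S : Submonoid A) (x : K) : Prop :=
  ∃ a : A, ∃ s ∈ S, x * algebraMap A K s = algebraMap A K a

/-- The multiplicative subset generated by the initial coefficients of `Φ_1,…,Φ_q`, given
their initial exponents `v i`. -/
def initCoeffMonoid (Φ : Fin q → (Fin p → MvPowerSeries (Fin n) A)) (v : Fin q → Idx n p) :
    Submonoid A :=
  Submonoid.closure (Set.range fun i => MvPowerSeries.coeff (v i).1 (Φ i (v i).2))

/-- Strict order on diagrams: lexicographic comparison of the increasing sequences of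
vertices (padded by `∞`). Equivalently: the smallest index at which the vertex sets
differ is a vertex of the first diagram. -/
def DiagLT (L : Fin n → ℝ) (N₁ N₂ : Set (Idx n p)) : Prop :=
  ∃ e, IsVertex N₁ e ∧ ¬ IsVertex N₂ e ∧ ∀ d, idxLt L d e → (IsVertex N₁ d ↔ IsVertex N₂ d)

/-- Order on diagrams. -/
def DiagLE (L : Fin n → ℝ) (N₁ N₂ : Set (Idx n p)) : Prop :=
  (∀ e, IsVertex N₁ e ↔ IsVertex N₂ e) ∨ DiagLT L N₁ N₂

end CommRing

end QDiv

namespace QDiv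

variable {n p q : ℕ}

section OrderLemmas

variable {L : Fin n → ℝ}

lemma lval_nonneg (hL : ∀ i, 0 < L i) (α : Fin n →₀ ℕ) : 0 ≤ lval L α :=
  Finset.sum_nonneg fun i _ => mul_nonneg (hL i).le (Nat.cast_nonneg _)

lemma lval_add (L : Fin n → ℝ) (α β : Fin n →₀ ℕ) :
    lval L (α + β) = lval L α + lval L β := by
  simp only [lval, Finsupp.add_apply, Nat.cast_add, mul_add]
  rw [Finset.sum_add_distrib]

lemma lval_pos (hL : ∀ i, 0 < L i) {β : Fin n →₀ ℕ} (hβ : β ≠ 0) : 0 < lval L β := by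
  obtain ⟨i, hi⟩ : ∃ i, β i ≠ 0 := by
    by_contra h; push_neg at h; exact hβ (Finsupp.ext fun i => h i)
  refine Finset.sum_pos' (fun j _ => mul_nonneg (hL j).le (Nat.cast_nonneg _))
    ⟨i, Finset.mem_univ i, mul_pos (hL i) ?_⟩
  exact_mod_cast Nat.pos_of_ne_zero hi

lemma lval_mono (hL : ∀ i, 0 < L i) {α β : Fin n →₀ ℕ} (h : α ≤ β) :
    lval L α ≤ lval L β := by
  obtain ⟨γ, rfl⟩ := le_iff_exists_add.mp h
  rw [lval_add]; linarith [lval_nonneg hL γ]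

lemma mlexLt_irrefl (a : Fin n →₀ ℕ) : ¬ mlexLt a a := by
  rintro ⟨i, -, h⟩; exact lt_irrefl _ h

lemma mlexLt_trans {a b c : Fin n →₀ ℕ} (h1 : mlexLt a b) (h2 : mlexLt b c) :
    mlexLt a c := by
  obtain ⟨i, hi, hilt⟩ := h1; obtain ⟨k, hk, hklt⟩ := h2
  rcases lt_trichotomy i k with h | h | h
  · exact ⟨i, fun j hj => (hi j hj).trans (hk j (hj.trans h)), hilt.trans_eq (hk i h)⟩
  · subst h; exact ⟨i, fun j hj => (hi j hj).trans (hk j hj), hilt.trans hklt⟩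
  · exact ⟨k, fun j hj => (hi j (hj.trans h)).trans (hk j hj), lt_of_eq_of_lt (hi k h) hklt⟩

lemma mlexLt_trichotomy {a b : Fin n →₀ ℕ} (hab : a ≠ b) : mlexLt a b ∨ mlexLt b a := by
  classical
  have hne : ∃ i, a i ≠ b i := by
    by_contra h; push_neg at h; exact hab (Finsupp.ext h)
  let s : Finset (Fin n) := Finset.univ.filter fun i => a i ≠ b i
  have hs : s.Nonempty := ⟨hne.choose, by simp [s, hne.choose_spec]⟩
  have his : s.min' hs ∈ s := s.min'_mem hs
  have hiab : a (s.min' hs) ≠ b (s.min' hs) := by simpa [s] using his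
  have hjeq : ∀ j < s.min' hs, a j = b j := by
    intro j hj
    by_contra hne2
    exact absurd (s.min'_le j (by simp [s, hne2])) (not_le.mpr hj)
  rcases lt_or_gt_of_ne hiab with h | h
  · exact Or.inl ⟨_, hjeq, h⟩
  · exact Or.inr ⟨_, fun j hj => (hjeq j hj).symm, h⟩

lemma idxLt_irrefl (L : Fin n → ℝ) (a : Idx n p) : ¬ idxLt L a a := by
  rintro (h | ⟨-, h | ⟨-, h⟩⟩)
  exacts [lt_irrefl _ h, lt_irrefl _ h, mlexLt_irrefl _ h]

lemma idxLt_trans {a b c : Idx n p} (h1 : idxLt L a b) (h2 : idxLt L b c) :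
    idxLt L a c := by
  rcases h1 with h1 | ⟨e1, h1⟩ <;> rcases h2 with h2 | ⟨e2, h2⟩
  · exact Or.inl (h1.trans h2)
  · exact Or.inl (h1.trans_eq e2)
  · exact Or.inl (e1.trans_lt h2)
  · refine Or.inr ⟨e1.trans e2, ?_⟩
    rcases h1 with h1 | ⟨j1, h1⟩ <;> rcases h2 with h2 | ⟨j2, h2⟩
    · exact Or.inl (h1.trans h2)
    · exact Or.inl (h1.trans_eq j2)
    · exact Or.inl (j1.trans_lt h2)
    · exact Or.inr ⟨j1.trans j2, mlexLt_trans h1 h2⟩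

lemma idxLt_trichotomy (L : Fin n → ℝ) (a b : Idx n p) :
    idxLt L a b ∨ a = b ∨ idxLt L b a := by
  rcases lt_trichotomy (lval L a.1) (lval L b.1) with h | h | h
  · exact Or.inl (Or.inl h)
  · rcases lt_trichotomy a.2 b.2 with hj | hj | hj
    · exact Or.inl (Or.inr ⟨h, Or.inl hj⟩)
    · by_cases hab : a.1 = b.1
      · exact Or.inr (Or.inl (Prod.ext hab hj))
      · rcases mlexLt_trichotomy hab with hm | hm
        · exact Or.inl (Or.inr ⟨h, Or.inr ⟨hj, hm⟩⟩)
        · exact Or.inr (Or.inr (Or.inr ⟨h.symm, Or.inr ⟨hj.symm, hm⟩⟩))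
    · exact Or.inr (Or.inr (Or.inr ⟨h.symm, Or.inl hj⟩))
  · exact Or.inr (Or.inr (Or.inl h))

lemma lval_le_of_idxLt {a b : Idx n p} (h : idxLt L a b) : lval L a.1 ≤ lval L b.1 := by
  rcases h with h | ⟨h, -⟩
  · exact h.le
  · exact h.le

lemma idxLt_add_right {a b : Idx n p} (h : idxLt L a b) (β : Fin n →₀ ℕ) :
    idxLt L (a.1 + β, a.2) (b.1 + β, b.2) := by
  rcases h with h | ⟨h, hj⟩
  · exact Or.inl (by rw [lval_add, lval_add]; linarith)
  · refine Or.inr ⟨by rw [lval_add, lval_add, h], ?_⟩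
    rcases hj with hj | ⟨hj, hm⟩
    · exact Or.inl hj
    · refine Or.inr ⟨hj, ?_⟩
      obtain ⟨i, hi, hlt⟩ := hm
      exact ⟨i, fun j hjlt => by simp [Finsupp.add_apply, hi j hjlt],
        by simpa [Finsupp.add_apply] using Nat.add_lt_add_right hlt (β i)⟩

lemma idxLt_add_pos (hL : ∀ i, 0 < L i) (a : Idx n p) {β : Fin n →₀ ℕ} (hβ : β ≠ 0) :
    idxLt L a (a.1 + β, a.2) :=
  Or.inl (by rw [lval_add]; linarith [lval_pos hL hβ])

lemma finite_lval_le (hL : ∀ i, 0 < L i) (C : ℝ) :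
    {α : Fin n →₀ ℕ | lval L α ≤ C}.Finite := by
  classical
  set bound : Fin n →₀ ℕ := Finsupp.equivFunOnFinite.symm (fun i => ⌈C / L i⌉₊) with hbound
  refine (Set.finite_Iic bound).subset ?_
  intro α hα
  rw [Set.mem_Iic]
  intro i
  have h1 : L i * (α i : ℝ) ≤ C := by
    refine le_trans ?_ hα
    exact Finset.single_le_sum (f := fun j => L j * (α j : ℝ))
      (fun j _ => mul_nonneg (hL j).le (Nat.cast_nonneg _)) (Finset.mem_univ i)
  have h2 : (α i : ℝ) ≤ C / L i := (le_div_iff₀' (hL i)).mpr h1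
  have h3 : (α i : ℝ) ≤ (⌈C / L i⌉₊ : ℝ) := h2.trans (Nat.le_ceil _)
  have : α i ≤ ⌈C / L i⌉₊ := by exact_mod_cast h3
  simpa [bound] using this

lemma idxLt_wf (hL : ∀ i, 0 < L i) : WellFounded (idxLt (p := p) L) := by
  rw [WellFounded.wellFounded_iff_has_min]
  intro s hs
  obtain ⟨a₀, ha₀⟩ := hs
  set T : Set (Idx n p) := {a | a ∈ s ∧ lval L a.1 ≤ lval L a₀.1} with hT
  have hTfin : T.Finite := by
    refine (((finite_lval_le hL (lval L a₀.1)).prod Set.finite_univ).subset ?_)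
    rintro ⟨α, j⟩ ⟨-, h2⟩
    exact ⟨h2, trivial⟩
  have hTne : T.Nonempty := ⟨a₀, ha₀, le_refl _⟩
  letI : IsTrans (Idx n p) (idxLt L) := ⟨fun _ _ _ => idxLt_trans⟩
  letI : IsIrrefl (Idx n p) (idxLt L) := ⟨idxLt_irrefl L⟩
  letI : IsStrictOrder (Idx n p) (idxLt L) := { }
  have hwo : T.WellFoundedOn (idxLt L) := hTfin.wellFoundedOn
  obtain ⟨⟨m, hmT⟩, -, hmin⟩ :=
    (WellFounded.wellFounded_iff_has_min.mp hwo) Set.univ ⟨⟨a₀, ⟨ha₀, le_refl _⟩⟩, trivial⟩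
  refine ⟨m, hmT.1, ?_⟩
  intro x hx hxm
  have hxT : x ∈ T := ⟨hx, (lval_le_of_idxLt hxm).trans hmT.2⟩
  exact hmin ⟨x, hxT⟩ trivial hxm

lemma exists_min (hL : ∀ i, 0 < L i) {s : Set (Idx n p)} (hs : s.Nonempty) :
    ∃ m ∈ s, ∀ x ∈ s, ¬ idxLt L x m :=
  (WellFounded.wellFounded_iff_has_min.mp (idxLt_wf hL)) s hs

end OrderLemmas

section LocLemmas

variable {A : Type*} [CommRing A] {K : Type*} [Field K] [Algebra A K] {S : Submonoid A}

lemma locMem_algebraMap (a : A) : locMem S (algebraMap A K a) :=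
  ⟨a, 1, S.one_mem, by simp⟩

lemma locMem_zero : locMem S (0 : K) := ⟨0, 1, S.one_mem, by simp⟩

lemma locMem_one : locMem S (1 : K) := ⟨1, 1, S.one_mem, by simp⟩

lemma locMem_add {x y : K} (hx : locMem S x) (hy : locMem S y) : locMem S (x + y) := by
  obtain ⟨a, s, hs, ha⟩ := hx; obtain ⟨b, t, ht, hb⟩ := hy
  refine ⟨a * t + b * s, s * t, S.mul_mem hs ht, ?_⟩
  have h : (x + y) * algebraMap A K (s * t) =
      (x * algebraMap A K s) * algebraMap A K t + (y * algebraMap A K t) * algebraMap A K s := by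
    rw [map_mul]; ring
  rw [h, ha, hb, ← map_mul, ← map_mul, ← map_add]

lemma locMem_mul {x y : K} (hx : locMem S x) (hy : locMem S y) : locMem S (x * y) := by
  obtain ⟨a, s, hs, ha⟩ := hx; obtain ⟨b, t, ht, hb⟩ := hy
  refine ⟨a * b, s * t, S.mul_mem hs ht, ?_⟩
  have h : (x * y) * algebraMap A K (s * t) =
      (x * algebraMap A K s) * (y * algebraMap A K t) := by
    rw [map_mul]; ring
  rw [h, ha, hb, ← map_mul]

lemma locMem_neg {x : K} (hx : locMem S x) : locMem S (-x) := by
  obtain ⟨a, s, hs, ha⟩ := hx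
  exact ⟨-a, s, hs, by rw [neg_mul, ha, ← map_neg]⟩

lemma locMem_inv {s : A} (hs : s ∈ S) (h0 : algebraMap A K s ≠ 0) :
    locMem S (algebraMap A K s)⁻¹ :=
  ⟨1, s, hs, by rw [inv_mul_cancel₀ h0, map_one]⟩

lemma locMem_sum {ι : Type*} (t : Finset ι) (f : ι → K)
    (h : ∀ i ∈ t, locMem S (f i)) : locMem S (∑ i ∈ t, f i) :=
  Finset.sum_induction f (locMem S) (fun _ _ => locMem_add) locMem_zero h

end LocLemmas

section ConeLemmas

variable {n p q : ℕ}

lemma mem_cone_self (d : Idx n p) : d ∈ cone d := ⟨rfl, 0, (add_zero _).symm⟩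

lemma cone_add {d e : Idx n p} (h : e ∈ cone d) (β : Fin n →₀ ℕ) :
    ((e.1 + β, e.2) : Idx n p) ∈ cone d := by
  obtain ⟨hj, γ, hγ⟩ := h
  exact ⟨hj, γ + β, by rw [hγ, add_assoc]⟩

lemma delta_eq_unique {v : Fin q → Idx n p} {e : Idx n p} {i k : Fin q}
    (hi : e ∈ Delta v i) (hk : e ∈ Delta v k) : i = k := by
  by_contra hne
  rcases lt_or_gt_of_ne hne with h | h
  · exact hk.2 (Set.mem_iUnion.mpr ⟨i, Set.mem_iUnion.mpr ⟨h, hi.1⟩⟩)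
  · exact hi.2 (Set.mem_iUnion.mpr ⟨k, Set.mem_iUnion.mpr ⟨h, hk.1⟩⟩)

lemma mem_delta_of_mem_cones {v : Fin q → Idx n p} {e : Idx n p}
    (h : e ∈ ⋃ i, cone (v i)) : ∃ i, e ∈ Delta v i := by
  classical
  have hex : ∃ i, e ∈ cone (v i) := by simpa using h
  let s : Finset (Fin q) := Finset.univ.filter fun i => e ∈ cone (v i)
  have hs : s.Nonempty := ⟨hex.choose, by simp [s, hex.choose_spec]⟩
  refine ⟨s.min' hs, ?_, ?_⟩
  · have := s.min'_mem hs; simpa [s] using this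
  · intro hmem
    obtain ⟨k, hk⟩ := Set.mem_iUnion.mp hmem
    obtain ⟨hklt, hkc⟩ := Set.mem_iUnion.mp hk
    exact absurd (s.min'_le k (by simp [s, hkc])) (not_le.mpr hklt)

lemma not_mem_deltaC_of_cone {v : Fin q → Idx n p} {e : Idx n p} {i : Fin q}
    (h : e ∈ cone (v i)) : e ∉ DeltaC v := fun hc => hc (Set.mem_iUnion.mpr ⟨i, h⟩)

lemma not_delta_of_deltaC {v : Fin q → Idx n p} {e : Idx n p} (h : e ∈ DeltaC v)
    (i : Fin q) : e ∉ Delta v i := fun hd => not_mem_deltaC_of_cone hd.1 h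

lemma delta_or_deltaC (v : Fin q → Idx n p) (e : Idx n p) :
    (∃ i, e ∈ Delta v i) ∨ e ∈ DeltaC v := by
  by_cases h : e ∈ ⋃ i, cone (v i)
  · exact Or.inl (mem_delta_of_mem_cones h)
  · exact Or.inr h

end ConeLemmas

section Division

variable {n p q : ℕ} {K : Type*} [Field K]

open Classical in
/-- The recursively defined family of coefficients of the quotients and the remainder in
the formal division algorithm. -/
noncomputable def divF (L : Fin n → ℝ) (hwf : WellFounded (idxLt (n := n) (p := p) L))
    (v : Fin q → Idx n p) (w : Fin q → K)
    (Θ : Fin q → (Fin p → MvPowerSeries (Fin n) K))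
    (G : Fin p → MvPowerSeries (Fin n) K) : Idx n p → K :=
  hwf.fix fun e ih =>
    (if he : ∃ i, e ∈ Delta v i then w he.choose else 1) *
    (MvPowerSeries.coeff e.1 (G e.2) -
      ∑ i : Fin q, ∑ βγ ∈ Finset.HasAntidiagonal.antidiagonal e.1,
        if h : (((v i).1 + βγ.1, (v i).2) : Idx n p) ∈ Delta v i ∧
            idxLt L (((v i).1 + βγ.1, (v i).2) : Idx n p) e
        then ih ((v i).1 + βγ.1, (v i).2) h.2 * MvPowerSeries.coeff βγ.2 (Θ i e.2)
        else 0)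

open Classical in
lemma divF_eq (L : Fin n → ℝ) (hwf : WellFounded (idxLt (n := n) (p := p) L))
    (v : Fin q → Idx n p) (w : Fin q → K)
    (Θ : Fin q → (Fin p → MvPowerSeries (Fin n) K))
    (G : Fin p → MvPowerSeries (Fin n) K) (e : Idx n p) :
    divF L hwf v w Θ G e =
    (if he : ∃ i, e ∈ Delta v i then w he.choose else 1) *
    (MvPowerSeries.coeff e.1 (G e.2) -
      ∑ i : Fin q, ∑ βγ ∈ Finset.HasAntidiagonal.antidiagonal e.1,
        if h : (((v i).1 + βγ.1, (v i).2) : Idx n p) ∈ Delta v i ∧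
            idxLt L (((v i).1 + βγ.1, (v i).2) : Idx n p) e
        then divF L hwf v w Θ G ((v i).1 + βγ.1, (v i).2) *
          MvPowerSeries.coeff βγ.2 (Θ i e.2)
        else 0) := by
  unfold divF
  conv_lhs => rw [WellFounded.fix_eq]

theorem division_exists {L : Fin n → ℝ} (hL : ∀ i, 0 < L i)
    {v : Fin q → Idx n p}
    {Θ : Fin q → (Fin p → MvPowerSeries (Fin n) K)}
    (hΘv : ∀ i, ∀ d ∈ suppT (Θ i), d ≠ v i → idxLt L (v i) d)
    (u : Fin q → K) (hu : ∀ i, u i = MvPowerSeries.coeff (v i).1 (Θ i (v i).2))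
    (hu0 : ∀ i, u i ≠ 0)
    (G : Fin p → MvPowerSeries (Fin n) K) :
    ∃ (Q : Fin q → MvPowerSeries (Fin n) K) (R : Fin p → MvPowerSeries (Fin n) K),
      (∀ i β, MvPowerSeries.coeff β (Q i) ≠ 0 →
        (((v i).1 + β, (v i).2) : Idx n p) ∈ Delta v i) ∧
      suppT R ⊆ DeltaC v ∧
      (∀ j, G j = ∑ i, Q i * Θ i j + R j) ∧
      (∀ P : K → Prop, P 0 → P 1 → (∀ x y, P x → P y → P (x + y)) →
        (∀ x y, P x → P y → P (x * y)) → (∀ x, P x → P (-x)) →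
        (∀ i, P (u i)⁻¹) → (∀ i, coeffsInT P (Θ i)) → coeffsInT P G →
        (∀ i, coeffsIn P (Q i)) ∧ coeffsInT P R) ∧
      (∀ μ : Idx n p, (∀ d ∈ suppT G, ¬ idxLt L d μ) → ∀ e ∈ suppT R, ¬ idxLt L e μ) := by
  classical
  set F : Idx n p → K := divF L (idxLt_wf hL) v (fun i => (u i)⁻¹) Θ G with hF
  have hFe : ∀ e : Idx n p, F e =
      (if he : ∃ i, e ∈ Delta v i then (u he.choose)⁻¹ else 1) *
      (MvPowerSeries.coeff e.1 (G e.2) -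
        ∑ i : Fin q, ∑ βγ ∈ Finset.HasAntidiagonal.antidiagonal e.1,
          if h : (((v i).1 + βγ.1, (v i).2) : Idx n p) ∈ Delta v i ∧
              idxLt L (((v i).1 + βγ.1, (v i).2) : Idx n p) e
          then F ((v i).1 + βγ.1, (v i).2) * MvPowerSeries.coeff βγ.2 (Θ i e.2)
          else 0) := by
    intro e
    rw [hF]
    exact divF_eq L (idxLt_wf hL) v (fun i => (u i)⁻¹) Θ G e
  set Q : Fin q → MvPowerSeries (Fin n) K := fun i =>
    ((fun β => if (((v i).1 + β, (v i).2) : Idx n p) ∈ Delta v i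
      then F ((v i).1 + β, (v i).2) else 0) : MvPowerSeries (Fin n) K) with hQdef
  set R : Fin p → MvPowerSeries (Fin n) K := fun j =>
    ((fun α => if ((α, j) : Idx n p) ∈ DeltaC v then F (α, j) else 0) :
      MvPowerSeries (Fin n) K) with hRdef
  have hQc : ∀ i β, MvPowerSeries.coeff β (Q i) =
      if (((v i).1 + β, (v i).2) : Idx n p) ∈ Delta v i
      then F ((v i).1 + β, (v i).2) else 0 := by
    intro i β; rw [hQdef]; rfl
  have hRc : ∀ (j : Fin p) (α : Fin n →₀ ℕ), MvPowerSeries.coeff α (R j) =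
      if ((α, j) : Idx n p) ∈ DeltaC v then F (α, j) else 0 := by
    intro j α; rw [hRdef]; rfl
  -- the coefficientwise identity
  have key : ∀ e : Idx n p, MvPowerSeries.coeff e.1 (G e.2) =
      (∑ i, MvPowerSeries.coeff e.1 (Q i * Θ i e.2)) +
      MvPowerSeries.coeff e.1 (R e.2) := by
    intro e
    have hprod : ∀ i : Fin q, MvPowerSeries.coeff e.1 (Q i * Θ i e.2) =
        (∑ βγ ∈ Finset.HasAntidiagonal.antidiagonal e.1,
          if h : (((v i).1 + βγ.1, (v i).2) : Idx n p) ∈ Delta v i ∧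
              idxLt L (((v i).1 + βγ.1, (v i).2) : Idx n p) e
          then F ((v i).1 + βγ.1, (v i).2) * MvPowerSeries.coeff βγ.2 (Θ i e.2) else 0)
        + (if e ∈ Delta v i then F e * u i else 0) := by
      intro i
      rw [MvPowerSeries.coeff_mul]
      have hterm : ∀ βγ ∈ Finset.HasAntidiagonal.antidiagonal e.1,
          MvPowerSeries.coeff βγ.1 (Q i) * MvPowerSeries.coeff βγ.2 (Θ i e.2) =
          (if h : (((v i).1 + βγ.1, (v i).2) : Idx n p) ∈ Delta v i ∧
              idxLt L (((v i).1 + βγ.1, (v i).2) : Idx n p) e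
           then F ((v i).1 + βγ.1, (v i).2) * MvPowerSeries.coeff βγ.2 (Θ i e.2) else 0)
          + (if ((((v i).1 + βγ.1, (v i).2) : Idx n p) ∈ Delta v i ∧
                (((v i).1 + βγ.1, (v i).2) : Idx n p) = e)
             then F e * MvPowerSeries.coeff βγ.2 (Θ i e.2) else 0) := by
        intro βγ hβγ
        have hsum : βγ.1 + βγ.2 = e.1 := Finset.HasAntidiagonal.mem_antidiagonal.mp hβγ
        rw [hQc]
        by_cases h1 : (((v i).1 + βγ.1, (v i).2) : Idx n p) ∈ Delta v i
        · by_cases h2 : idxLt L (((v i).1 + βγ.1, (v i).2) : Idx n p) e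
          · have hne : ¬((((v i).1 + βγ.1, (v i).2) : Idx n p) ∈ Delta v i ∧
                (((v i).1 + βγ.1, (v i).2) : Idx n p) = e) :=
              fun hc => idxLt_irrefl L e (hc.2 ▸ h2)
            rw [if_pos h1, dif_pos ⟨h1, h2⟩, if_neg hne, add_zero]
          · by_cases h3 : (((v i).1 + βγ.1, (v i).2) : Idx n p) = e
            · rw [if_pos h1, dif_neg (fun hc => h2 hc.2), if_pos ⟨h1, h3⟩, zero_add, h3]
            · have hz : MvPowerSeries.coeff βγ.2 (Θ i e.2) = 0 := by
                by_contra hnz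
                have hd : ((βγ.2, e.2) : Idx n p) ∈ suppT (Θ i) := hnz
                by_cases hde : ((βγ.2, e.2) : Idx n p) = v i
                · apply h3
                  have h11 : βγ.2 = (v i).1 := by rw [← hde]
                  have h12 : e.2 = (v i).2 := by rw [← hde]
                  refine Prod.ext ?_ h12.symm
                  show (v i).1 + βγ.1 = e.1
                  rw [← h11, add_comm]
                  exact hsum
                · have hlt := idxLt_add_right (hΘv i _ hd hde) βγ.1
                  apply h2
                  rwa [show ((βγ.2 + βγ.1, e.2) : Idx n p) = e from
                    Prod.ext (by rw [add_comm, hsum]) rfl] at hlt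
              have hne1 : ¬((((v i).1 + βγ.1, (v i).2) : Idx n p) ∈ Delta v i ∧
                  idxLt L (((v i).1 + βγ.1, (v i).2) : Idx n p) e) := fun hc => h2 hc.2
              have hne2 : ¬((((v i).1 + βγ.1, (v i).2) : Idx n p) ∈ Delta v i ∧
                  (((v i).1 + βγ.1, (v i).2) : Idx n p) = e) := fun hc => h3 hc.2
              rw [if_pos h1, hz, mul_zero, dif_neg hne1, if_neg hne2, add_zero]
        · have hne1 : ¬((((v i).1 + βγ.1, (v i).2) : Idx n p) ∈ Delta v i ∧
              idxLt L (((v i).1 + βγ.1, (v i).2) : Idx n p) e) := fun hc => h1 hc.1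
          have hne2 : ¬((((v i).1 + βγ.1, (v i).2) : Idx n p) ∈ Delta v i ∧
              (((v i).1 + βγ.1, (v i).2) : Idx n p) = e) := fun hc => h1 hc.1
          rw [if_neg h1, zero_mul, dif_neg hne1, if_neg hne2, add_zero]
      rw [Finset.sum_congr rfl hterm, Finset.sum_add_distrib]
      congr 1
      by_cases hei : e ∈ Delta v i
      · obtain ⟨he2, β₀, he1⟩ := hei.1
        rw [if_pos hei]
        rw [Finset.sum_eq_single ((β₀, (v i).1) : (Fin n →₀ ℕ) × (Fin n →₀ ℕ))]
        · have hslot : (((v i).1 + β₀, (v i).2) : Idx n p) = e :=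
            Prod.ext (by rw [← he1]) he2.symm
          rw [if_pos ⟨hslot ▸ hei, hslot⟩, he2, ← hu i]
        · intro βγ hβγ hne
          refine if_neg ?_
          rintro ⟨-, h2⟩
          apply hne
          have hsum : βγ.1 + βγ.2 = e.1 := Finset.HasAntidiagonal.mem_antidiagonal.mp hβγ
          have hfst : (v i).1 + βγ.1 = e.1 := congrArg Prod.fst h2
          have hb : βγ.1 = β₀ := by
            apply add_left_cancel (a := (v i).1)
            rw [hfst, he1]
          have hg : βγ.2 = (v i).1 := by
            apply add_left_cancel (a := βγ.1)
            rw [hsum, hb, he1, add_comm]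
          exact Prod.ext hb hg
        · intro habs
          exact absurd (Finset.HasAntidiagonal.mem_antidiagonal.mpr (by rw [add_comm, ← he1])) habs
      · rw [if_neg hei]
        refine Finset.sum_eq_zero fun βγ _ => if_neg ?_
        rintro ⟨h1, h2⟩
        exact hei (h2 ▸ h1)
    rw [Finset.sum_congr rfl (fun i _ => hprod i), Finset.sum_add_distrib]
    rcases delta_or_deltaC v e with ⟨i₀, hi₀⟩ | hC
    · have hdsum : (∑ i, if e ∈ Delta v i then F e * u i else 0) = F e * u i₀ := by
        rw [Finset.sum_eq_single i₀]
        · rw [if_pos hi₀]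
        · intro i _ hne
          exact if_neg fun hc => hne (delta_eq_unique hc hi₀)
        · intro habs; exact absurd (Finset.mem_univ i₀) habs
      have hRz : MvPowerSeries.coeff e.1 (R e.2) = 0 := by
        rw [hRc]
        simp only [Prod.mk.eta]
        exact if_neg fun hc => not_delta_of_deltaC hc i₀ hi₀
      have hex : ∃ i, e ∈ Delta v i := ⟨i₀, hi₀⟩
      have hch : hex.choose = i₀ := delta_eq_unique hex.choose_spec hi₀
      have hFeq := hFe e
      rw [dif_pos hex, hch] at hFeq
      rw [hdsum, hRz, add_zero, hFeq]
      rw [mul_comm ((u i₀)⁻¹) _, mul_assoc, inv_mul_cancel₀ (hu0 i₀), mul_one]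
      ring
    · have hdsum : (∑ i, if e ∈ Delta v i then F e * u i else 0) = 0 :=
        Finset.sum_eq_zero fun i _ => if_neg (not_delta_of_deltaC hC i)
      have hnex : ¬ ∃ i, e ∈ Delta v i := fun ⟨i, hi⟩ => not_delta_of_deltaC hC i hi
      have hFeq := hFe e
      rw [dif_neg hnex, one_mul] at hFeq
      rw [hdsum, add_zero, hRc]
      simp only [Prod.mk.eta]
      rw [if_pos hC, hFeq]
      ring
  refine ⟨Q, R, ?_, ?_, ?_, ?_, ?_⟩
  · intro i β h
    by_contra hc
    rw [hQc, if_neg hc] at h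
    exact h rfl
  · intro e he
    have : MvPowerSeries.coeff e.1 (R e.2) ≠ 0 := he
    rw [hRc] at this
    simp only [Prod.mk.eta] at this
    by_contra hc
    rw [if_neg hc] at this
    exact this rfl
  · intro j
    apply MvPowerSeries.ext
    intro α
    have h := key (α, j)
    simpa [map_add, map_sum] using h
  · intro P h0 h1 hadd hmul hneg hinv hΘP hGP
    have hsub : ∀ x y : K, P x → P y → P (x - y) := fun x y hx hy => by
      rw [sub_eq_add_neg]; exact hadd _ _ hx (hneg _ hy)
    have hsumP : ∀ {ι : Type} (t : Finset ι) (f : ι → K),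
        (∀ i ∈ t, P (f i)) → P (∑ i ∈ t, f i) := fun t f h =>
      Finset.sum_induction f P hadd h0 h
    have hPF : ∀ e : Idx n p, P (F e) := by
      intro e
      refine (idxLt_wf hL).induction (C := fun e => P (F e)) e ?_
      intro e ih
      rw [hFe e]
      apply hmul
      · by_cases hex : ∃ i, e ∈ Delta v i
        · rw [dif_pos hex]; exact hinv _
        · rw [dif_neg hex]; exact h1
      · refine hsub _ _ (hGP e.2 e.1) (hsumP _ _ fun i _ => hsumP _ _ fun βγ _ => ?_)
        by_cases h : (((v i).1 + βγ.1, (v i).2) : Idx n p) ∈ Delta v i ∧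
            idxLt L (((v i).1 + βγ.1, (v i).2) : Idx n p) e
        · rw [dif_pos h]
          exact hmul _ _ (ih _ h.2) (hΘP i e.2 βγ.2)
        · rw [dif_neg h]; exact h0
    constructor
    · intro i β
      rw [hQc]
      by_cases h : (((v i).1 + β, (v i).2) : Idx n p) ∈ Delta v i
      · rw [if_pos h]; exact hPF _
      · rw [if_neg h]; exact h0
    · intro j α
      rw [hRc]
      by_cases h : ((α, j) : Idx n p) ∈ DeltaC v
      · rw [if_pos h]; exact hPF _
      · rw [if_neg h]; exact h0
  · intro μ hGμ
    have hFμ : ∀ e : Idx n p, idxLt L e μ → F e = 0 := by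
      intro e
      refine (idxLt_wf hL).induction (C := fun e => idxLt L e μ → F e = 0) e ?_
      intro e ih hlt
      rw [hFe e]
      have hGe : MvPowerSeries.coeff e.1 (G e.2) = 0 := by
        by_contra h
        exact hGμ e h hlt
      have hsz : (∑ i : Fin q, ∑ βγ ∈ Finset.HasAntidiagonal.antidiagonal e.1,
          if h : (((v i).1 + βγ.1, (v i).2) : Idx n p) ∈ Delta v i ∧
              idxLt L (((v i).1 + βγ.1, (v i).2) : Idx n p) e
          then F ((v i).1 + βγ.1, (v i).2) * MvPowerSeries.coeff βγ.2 (Θ i e.2)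
          else 0) = 0 := by
        refine Finset.sum_eq_zero fun i _ => Finset.sum_eq_zero fun βγ _ => ?_
        by_cases h : (((v i).1 + βγ.1, (v i).2) : Idx n p) ∈ Delta v i ∧
            idxLt L (((v i).1 + βγ.1, (v i).2) : Idx n p) e
        · rw [dif_pos h, ih _ h.2 (idxLt_trans h.2 hlt), zero_mul]
        · rw [dif_neg h]
      rw [hGe, hsz, sub_zero, mul_zero]
    intro e he hlt
    have : MvPowerSeries.coeff e.1 (R e.2) ≠ 0 := he
    rw [hRc] at this
    simp only [Prod.mk.eta] at this
    apply this
    rw [hFμ e hlt]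
    split <;> rfl

end Division

section Diagram

variable {n p q : ℕ}

lemma diagram_subset_cones {L : Fin n → ℝ} (hL : ∀ i, 0 < L i)
    {A : Type*} [CommRing A]
    {M : Submodule (MvPowerSeries (Fin n) A) (Fin p → MvPowerSeries (Fin n) A)}
    {v : Fin q → Idx n p}
    (hvert : ∀ e : Idx n p, IsVertex (diagram L M) e ↔ ∃ i, v i = e) :
    diagram L M ⊆ ⋃ i, cone (v i) := by
  intro e he
  revert he
  refine (idxLt_wf hL).induction
    (C := fun e => e ∈ diagram L M → e ∈ ⋃ i, cone (v i)) e ?_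
  intro e ih he
  by_cases hv : IsVertex (diagram L M) e
  · obtain ⟨i, hi⟩ := (hvert e).mp hv
    exact Set.mem_iUnion.mpr ⟨i, hi ▸ mem_cone_self (v i)⟩
  · have hsh : shift (diagram L M \ {e}) = diagram L M := by
      by_contra h; exact hv ⟨he, h⟩
    have hmem : e ∈ shift (diagram L M \ {e}) := hsh.symm ▸ he
    obtain ⟨d, hd, β, hβ⟩ := hmem
    have hβ0 : β ≠ 0 := by
      rintro rfl
      have hed : e = d := by rw [hβ, add_zero]
      exact hd.2 (Set.mem_singleton_iff.mpr hed.symm)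
    have hlt : idxLt L d e := by
      rw [hβ]; exact idxLt_add_pos hL d hβ0
    obtain ⟨i, hi⟩ := Set.mem_iUnion.mp (ih d hlt hd.1)
    exact Set.mem_iUnion.mpr ⟨i, hβ ▸ cone_add hi β⟩

lemma exp_mem_diagram
    {A : Type*} [CommRing A] [IsDomain A]
    {K : Type*} [Field K] [Algebra A K] [IsFractionRing A K]
    {L : Fin n → ℝ} (hL : ∀ i, 0 < L i)
    {M : Submodule (MvPowerSeries (Fin n) A) (Fin p → MvPowerSeries (Fin n) A)}
    {P : K → Prop} {H : Fin p → MvPowerSeries (Fin n) K}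
    (hH : inSpanP P ((fun F : Fin p → MvPowerSeries (Fin n) A =>
        fun j => MvPowerSeries.map (algebraMap A K) (F j)) ''
      (M : Set (Fin p → MvPowerSeries (Fin n) A))) H)
    {e : Idx n p} (heH : e ∈ suppT H) (hmin : ∀ d ∈ suppT H, ¬ idxLt L d e) :
    e ∈ diagram L M := by
  classical
  obtain ⟨k, c, m, hc, hm, hG⟩ := hH
  choose m' hm'M hm'eq using hm
  have hinj : Function.Injective (algebraMap A K) := IsFractionRing.injective A K
  -- truncation set
  have hT : {β : Fin n →₀ ℕ | lval L β ≤ lval L e.1}.Finite := finite_lval_le hL _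
  set Tf : Finset (Fin n →₀ ℕ) := hT.toFinset with hTf
  have hTmem : ∀ β : Fin n →₀ ℕ, β ∈ Tf ↔ lval L β ≤ lval L e.1 := by
    intro β; rw [hTf, Set.Finite.mem_toFinset]; rfl
  -- common denominator
  obtain ⟨b, hb⟩ := IsLocalization.exist_integer_multiples (nonZeroDivisors A)
    ((Finset.univ : Finset (Fin k)) ×ˢ Tf)
    (fun lβ => MvPowerSeries.coeff lβ.2 (c lβ.1))
  have hInt : ∀ (l : Fin k) (β : Fin n →₀ ℕ), β ∈ Tf →
      ∃ a : A, algebraMap A K a = (b : A) • MvPowerSeries.coeff β (c l) := by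
    intro l β hβ
    obtain ⟨a, ha⟩ := hb (l, β) (Finset.mem_product.mpr ⟨Finset.mem_univ _, hβ⟩)
    exact ⟨a, ha⟩
  choose aa haa using hInt
  -- truncated polynomial coefficients over A
  set ch : Fin k → MvPowerSeries (Fin n) A := fun l =>
    ((fun β => if h : β ∈ Tf then aa l β h else 0) : MvPowerSeries (Fin n) A) with hch
  have hchc : ∀ (l : Fin k) (β : Fin n →₀ ℕ), MvPowerSeries.coeff β (ch l) =
      if h : β ∈ Tf then aa l β h else 0 := by
    intro l β; rw [hch]; rfl
  set mh : Fin p → MvPowerSeries (Fin n) A := ∑ l, ch l • m' l with hmh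
  have hmhM : mh ∈ M := Submodule.sum_mem M fun l _ => Submodule.smul_mem M (ch l) (hm'M l)
  -- key coefficient computation
  have hkey : ∀ d : Idx n p, lval L d.1 ≤ lval L e.1 →
      algebraMap A K (MvPowerSeries.coeff d.1 (mh d.2)) =
      algebraMap A K (b : A) * MvPowerSeries.coeff d.1 (H d.2) := by
    intro d hd
    have h1 : MvPowerSeries.coeff d.1 (mh d.2) =
        ∑ l, ∑ βγ ∈ Finset.HasAntidiagonal.antidiagonal d.1,
          MvPowerSeries.coeff βγ.1 (ch l) * MvPowerSeries.coeff βγ.2 (m' l d.2) := by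
      rw [hmh]
      rw [Finset.sum_apply]
      rw [map_sum]
      refine Finset.sum_congr rfl fun l _ => ?_
      rw [Pi.smul_apply, smul_eq_mul, MvPowerSeries.coeff_mul]
    rw [h1, map_sum]
    have h2 : ∀ l : Fin k,
        algebraMap A K (∑ βγ ∈ Finset.HasAntidiagonal.antidiagonal d.1,
          MvPowerSeries.coeff βγ.1 (ch l) * MvPowerSeries.coeff βγ.2 (m' l d.2)) =
        algebraMap A K (b : A) * MvPowerSeries.coeff d.1 (c l * m l d.2) := by
      intro l
      rw [map_sum, MvPowerSeries.coeff_mul, Finset.mul_sum]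
      refine Finset.sum_congr rfl fun βγ hβγ => ?_
      have hsum : βγ.1 + βγ.2 = d.1 := Finset.HasAntidiagonal.mem_antidiagonal.mp hβγ
      have hβle : βγ.1 ∈ Tf := by
        rw [hTmem]
        refine le_trans (lval_mono hL ?_) hd
        exact le_iff_exists_add.mpr ⟨βγ.2, hsum.symm⟩
      rw [map_mul, hchc, dif_pos hβle, haa l βγ.1 hβle, Algebra.smul_def]
      have hmc : algebraMap A K (MvPowerSeries.coeff βγ.2 (m' l d.2)) =
          MvPowerSeries.coeff βγ.2 (m l d.2) := by
        rw [← MvPowerSeries.coeff_map]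
        exact congrArg (MvPowerSeries.coeff βγ.2) (congrFun (hm'eq l) d.2)
      rw [hmc]
      ring
    rw [Finset.sum_congr rfl fun l _ => h2 l, ← Finset.mul_sum]
    congr 1
    rw [hG d.2, map_sum]
  refine ⟨mh, hmhM, ?_, ?_⟩
  · -- e ∈ suppT mh
    have hb0 : algebraMap A K (b : A) ≠ 0 := by
      intro h
      exact nonZeroDivisors.ne_zero b.2 (hinj (by rw [h, map_zero]))
    intro h0
    have := hkey e le_rfl
    rw [h0, map_zero] at this
    exact heH (by
      have := this.symm
      rcases mul_eq_zero.mp this with h | h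
      · exact absurd h hb0
      · exact h)
  · intro d hd
    intro hlt
    have hd0 : MvPowerSeries.coeff d.1 (H d.2) = 0 := by
      by_contra h
      exact hmin d h hlt
    have := hkey d ((lval_le_of_idxLt hlt))
    rw [hd0, mul_zero] at this
    have : MvPowerSeries.coeff d.1 (mh d.2) = 0 := hinj (by rw [this, map_zero])
    exact hd this

end Diagram

section SpanLemmas

variable {n p : ℕ} {K : Type*} [Field K] {P : K → Prop}
variable {Mset : Set (Fin p → MvPowerSeries (Fin n) K)}

lemma inSpanP_zero : inSpanP P Mset (fun _ => 0) :=
  ⟨0, Fin.elim0, Fin.elim0, fun l => l.elim0, fun l => l.elim0, fun j => by simp⟩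

lemma inSpanP_congr {G G' : Fin p → MvPowerSeries (Fin n) K} (h : ∀ j, G j = G' j)
    (hG' : inSpanP P Mset G') : inSpanP P Mset G := by
  obtain ⟨k, c, m, hc, hm, hE⟩ := hG'
  exact ⟨k, c, m, hc, hm, fun j => (h j).trans (hE j)⟩

lemma inSpanP_add {G₁ G₂ : Fin p → MvPowerSeries (Fin n) K}
    (h₁ : inSpanP P Mset G₁) (h₂ : inSpanP P Mset G₂) :
    inSpanP P Mset (fun j => G₁ j + G₂ j) := by
  obtain ⟨k₁, c₁, m₁, hc₁, hm₁, hG₁⟩ := h₁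
  obtain ⟨k₂, c₂, m₂, hc₂, hm₂, hG₂⟩ := h₂
  refine ⟨k₁ + k₂, Fin.append c₁ c₂, Fin.append m₁ m₂, ?_, ?_, ?_⟩
  · intro l
    refine Fin.addCases (motive := fun l => coeffsIn P (Fin.append c₁ c₂ l)) ?_ ?_ l
    · intro i; rw [Fin.append_left]; exact hc₁ i
    · intro i; rw [Fin.append_right]; exact hc₂ i
  · intro l
    refine Fin.addCases (motive := fun l => Fin.append m₁ m₂ l ∈ Mset) ?_ ?_ l
    · intro i; rw [Fin.append_left]; exact hm₁ i
    · intro i; rw [Fin.append_right]; exact hm₂ i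
  · intro j
    rw [Fin.sum_univ_add]
    simp only [Fin.append_left, Fin.append_right]
    rw [hG₁ j, hG₂ j]

lemma inSpanP_neg (hneg : ∀ x : K, P x → P (-x)) {G : Fin p → MvPowerSeries (Fin n) K}
    (h : inSpanP P Mset G) : inSpanP P Mset (fun j => -(G j)) := by
  obtain ⟨k, c, m, hc, hm, hG⟩ := h
  refine ⟨k, fun l => -(c l), m, ?_, hm, ?_⟩
  · intro l; dsimp only [coeffsIn]; intro α
    rw [map_neg]
    exact hneg _ (hc l α)
  · intro j
    show -(G j) = ∑ l, -(c l) * m l j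
    rw [hG j]
    simp only [neg_mul]
    rw [← Finset.sum_neg_distrib]

lemma inSpanP_smul (hmul : ∀ x y : K, P x → P y → P (x * y))
    (h0 : P 0) (hadd : ∀ x y : K, P x → P y → P (x + y))
    {G : Fin p → MvPowerSeries (Fin n) K} (h : inSpanP P Mset G)
    (c₀ : MvPowerSeries (Fin n) K) (hc₀ : coeffsIn P c₀) :
    inSpanP P Mset (fun j => c₀ * G j) := by
  classical
  obtain ⟨k, c, m, hc, hm, hG⟩ := h
  refine ⟨k, fun l => c₀ * c l, m, ?_, hm, ?_⟩
  · intro l; dsimp only [coeffsIn]; intro α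
    rw [MvPowerSeries.coeff_mul]
    exact Finset.sum_induction _ P hadd h0 fun βγ _ => hmul _ _ (hc₀ _) (hc l _)
  · intro j
    show c₀ * G j = ∑ l, (c₀ * c l) * m l j
    rw [hG j, Finset.mul_sum]
    exact Finset.sum_congr rfl fun l _ => (mul_assoc _ _ _).symm

lemma inSpanP_sum {ι : Type*} (t : Finset ι) (f : ι → (Fin p → MvPowerSeries (Fin n) K))
    (h : ∀ i ∈ t, inSpanP P Mset (f i)) :
    inSpanP P Mset (fun j => ∑ i ∈ t, f i j) := by
  classical
  induction t using Finset.induction_on with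
  | empty => simpa using (inSpanP_zero (P := P) (Mset := Mset))
  | @insert a s hni ih =>
    have h1 : inSpanP P Mset (fun j => f a j + ∑ i ∈ s, f i j) :=
      inSpanP_add (h a (Finset.mem_insert_self a s))
        (ih fun i hi => h i (Finset.mem_insert_of_mem hi))
    refine inSpanP_congr (fun j => ?_) h1
    rw [Finset.sum_insert hni]

end SpanLemmas
/-- **Existence and uniqueness of the standard basis** (Corollary 2.3(2)). There are
unique generators `Ψ_1,…,Ψ_q` of the `S⁻¹A[[x]]`-submodule of `S⁻¹A[[x]]^p` generated
by `M` of the form `Ψ_i = x^{(α_i,j_i)} + R_i` with `supp R_i ⊆ Δ`. -/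
theorem standard_basis_exists_unique
    {n p q : ℕ} (hn : 0 < n) (hp : 0 < p)
    {A : Type*} [CommRing A] [IsDomain A]
    {K : Type*} [Field K] [Algebra A K] [IsFractionRing A K]
    (L : Fin n → ℝ) (hL : ∀ i, 0 < L i)
    (M : Submodule (MvPowerSeries (Fin n) A) (Fin p → MvPowerSeries (Fin n) A))
    (hM : M ≠ ⊥)
    (v : Fin q → Idx n p)
    (hvmono : ∀ i k : Fin q, i < k → idxLt L (v i) (v k))
    (hvert : ∀ e : Idx n p, IsVertex (diagram L M) e ↔ ∃ i, v i = e)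
    (Φ : Fin q → (Fin p → MvPowerSeries (Fin n) A))
    (hΦM : ∀ i, Φ i ∈ M) (hΦexp : ∀ i, IsExp L (Φ i) (v i)) :
    ∃ Ψ : Fin q → (Fin p → MvPowerSeries (Fin n) K),
      -- Ψ_i lies in S⁻¹A[[x]]⋅M and has the form x^{(α_i,j_i)} + R_i, supp R_i ⊆ Δ
      ((∀ i, inSpanP (locMem (initCoeffMonoid Φ v))
          ((fun F : Fin p → MvPowerSeries (Fin n) A =>
              fun j => MvPowerSeries.map (algebraMap A K) (F j)) ''
            (M : Set (Fin p → MvPowerSeries (Fin n) A))) (Ψ i)) ∧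
        (∀ i, ∃ R : Fin p → MvPowerSeries (Fin n) K,
          suppT R ⊆ DeltaC v ∧ Ψ i = xMon (v i) + R)) ∧
      -- moreover Ψ_1,…,Ψ_q generate S⁻¹A[[x]]⋅M
      (∀ G : Fin p → MvPowerSeries (Fin n) K,
        inSpanP (locMem (initCoeffMonoid Φ v))
            ((fun F : Fin p → MvPowerSeries (Fin n) A =>
                fun j => MvPowerSeries.map (algebraMap A K) (F j)) ''
              (M : Set (Fin p → MvPowerSeries (Fin n) A))) G ↔
          ∃ c : Fin q → MvPowerSeries (Fin n) K,
            (∀ i, coeffsIn (locMem (initCoeffMonoid Φ v)) (c i)) ∧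
            ∀ j, G j = ∑ i, c i * Ψ i j) ∧
      -- uniqueness
      (∀ Ψ' : Fin q → (Fin p → MvPowerSeries (Fin n) K),
        ((∀ i, inSpanP (locMem (initCoeffMonoid Φ v))
            ((fun F : Fin p → MvPowerSeries (Fin n) A =>
                fun j => MvPowerSeries.map (algebraMap A K) (F j)) ''
              (M : Set (Fin p → MvPowerSeries (Fin n) A))) (Ψ' i)) ∧
          (∀ i, ∃ R : Fin p → MvPowerSeries (Fin n) K,
            suppT R ⊆ DeltaC v ∧ Ψ' i = xMon (v i) + R)) → Ψ' = Ψ) := by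

  classical
  have hinj : Function.Injective (algebraMap A K) := IsFractionRing.injective A K
  set S : Submonoid A := initCoeffMonoid Φ v with hS
  set Mimg : Set (Fin p → MvPowerSeries (Fin n) K) :=
    ((fun F : Fin p → MvPowerSeries (Fin n) A =>
        fun j => MvPowerSeries.map (algebraMap A K) (F j)) ''
      (M : Set (Fin p → MvPowerSeries (Fin n) A))) with hMimg
  have hB0 : locMem (K := K) S 0 := locMem_zero
  have hB1 : locMem (K := K) S 1 := locMem_one
  have hBadd : ∀ x y : K, locMem S x → locMem S y → locMem S (x + y) :=
    fun _ _ => locMem_add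
  have hBmul : ∀ x y : K, locMem S x → locMem S y → locMem S (x * y) :=
    fun _ _ => locMem_mul
  have hBneg : ∀ x : K, locMem S x → locMem S (-x) := fun _ => locMem_neg
  -- the images of the Φ i
  set ΘK : Fin q → (Fin p → MvPowerSeries (Fin n) K) :=
    fun i j => MvPowerSeries.map (algebraMap A K) (Φ i j) with hΘK
  have hΘKmem : ∀ i, ΘK i ∈ Mimg := by
    intro i; rw [hMimg, hΘK]; exact ⟨Φ i, hΦM i, rfl⟩
  -- the initial coefficients
  have hu0A : ∀ i, MvPowerSeries.coeff (v i).1 (Φ i (v i).2) ≠ 0 := fun i => (hΦexp i).1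
  set u : Fin q → K := fun i => MvPowerSeries.coeff (v i).1 (ΘK i (v i).2) with huDef
  have huAlg : ∀ i, u i = algebraMap A K (MvPowerSeries.coeff (v i).1 (Φ i (v i).2)) := by
    intro i; rw [huDef, hΘK]
    exact MvPowerSeries.coeff_map _ _ _
  have hu0 : ∀ i, u i ≠ 0 := by
    intro i h
    exact hu0A i (hinj (by rw [map_zero, ← huAlg i]; exact h))
  have huS : ∀ i, MvPowerSeries.coeff (v i).1 (Φ i (v i).2) ∈ S := by
    intro i; rw [hS]
    exact Submonoid.subset_closure ⟨i, rfl⟩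
  have huinv : ∀ i, locMem S (u i)⁻¹ := by
    intro i; rw [huAlg i]
    exact locMem_inv (huS i) (by rw [← huAlg i]; exact hu0 i)
  have hΘv : ∀ i, ∀ d ∈ suppT (ΘK i), d ≠ v i → idxLt L (v i) d := by
    intro i d hd hne
    have hdA : d ∈ suppT (Φ i) := by
      intro h0
      apply hd
      show MvPowerSeries.coeff d.1 (ΘK i d.2) = 0
      rw [hΘK]
      show MvPowerSeries.coeff d.1
        (MvPowerSeries.map (algebraMap A K) (Φ i d.2)) = 0
      rw [MvPowerSeries.coeff_map, h0, map_zero]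
    rcases idxLt_trichotomy L (v i) d with h | h | h
    · exact h
    · exact absurd h.symm hne
    · exact absurd h ((hΦexp i).2 d hdA)
  have hΘP : ∀ i, coeffsInT (locMem S) (ΘK i) := by
    intro i j α
    show locMem S (MvPowerSeries.coeff α (ΘK i j))
    rw [hΘK]
    show locMem S (MvPowerSeries.coeff α
      (MvPowerSeries.map (algebraMap A K) (Φ i j)))
    rw [MvPowerSeries.coeff_map]
    exact locMem_algebraMap _
  -- coefficients of the monomial tuples
  have hxMc : ∀ (e : Idx n p) (j : Fin p) (α : Fin n →₀ ℕ),
      MvPowerSeries.coeff α ((xMon e : Fin p → MvPowerSeries (Fin n) K) j) =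
      if j = e.2 ∧ α = e.1 then 1 else 0 := by
    intro e j α
    rw [xMon]
    by_cases hj : j = e.2
    · rw [if_pos hj, MvPowerSeries.coeff_monomial]
      by_cases hα : α = e.1
      · rw [if_pos hα, if_pos ⟨hj, hα⟩]
      · rw [if_neg hα, if_neg fun hc => hα hc.2]
    · rw [if_neg hj, map_zero, if_neg fun hc => hj hc.1]
  have hxmin : ∀ i : Fin q, ∀ d ∈ suppT ((xMon (v i)) : Fin p → MvPowerSeries (Fin n) K),
      ¬ idxLt L d (v i) := by
    intro i d hd
    have hdv : d = v i := by
      by_contra hne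
      apply hd
      show MvPowerSeries.coeff d.1 ((xMon (v i) : Fin p → MvPowerSeries (Fin n) K) d.2) = 0
      rw [hxMc]
      exact if_neg fun hc => hne (Prod.ext hc.2 hc.1)
    rw [hdv]
    exact idxLt_irrefl L (v i)
  have hxP : ∀ i : Fin q, coeffsInT (locMem S)
      ((xMon (v i)) : Fin p → MvPowerSeries (Fin n) K) := by
    intro i j α
    show locMem S (MvPowerSeries.coeff α ((xMon (v i) : Fin p → MvPowerSeries (Fin n) K) j))
    rw [hxMc]
    split
    · exact hB1
    · exact hB0
  -- divide each monomial x^{v i} by the Φ's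
  choose Qx Rx hQxsupp hRxsupp hxEq hxPc hxμ using
    fun i : Fin q => division_exists hL hΘv u (fun i' => by rw [huDef]) hu0
      ((xMon (v i)) : Fin p → MvPowerSeries (Fin n) K)
  set Ψ : Fin q → (Fin p → MvPowerSeries (Fin n) K) :=
    fun i j => xMon (v i) j - Rx i j with hΨ
  have hΨeq : ∀ i j, Ψ i j = ∑ i', Qx i i' * ΘK i' j := by
    intro i j
    show xMon (v i) j - Rx i j = _
    rw [hxEq i j]
    ring
  have hQxB := fun i : Fin q =>
    hxPc i (locMem S) hB0 hB1 hBadd hBmul hBneg huinv hΘP (hxP i)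
  have hΨB : ∀ i, coeffsInT (locMem S) (Ψ i) := by
    intro i j α
    show locMem S (MvPowerSeries.coeff α (xMon (v i) j - Rx i j))
    rw [map_sub, sub_eq_add_neg]
    exact hBadd _ _ (hxP i j α) (hBneg _ ((hQxB i).2 j α))
  have hRxvz : ∀ i, MvPowerSeries.coeff (v i).1 (Rx i (v i).2) = 0 := by
    intro i
    by_contra h
    exact not_mem_deltaC_of_cone (mem_cone_self (v i))
      (hRxsupp i (show (v i) ∈ suppT (Rx i) from h))
  have hΨu : ∀ i, MvPowerSeries.coeff (v i).1 (Ψ i (v i).2) = 1 := by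
    intro i
    show MvPowerSeries.coeff (v i).1 (xMon (v i) (v i).2 - Rx i (v i).2) = 1
    rw [map_sub, hxMc, if_pos ⟨rfl, rfl⟩, hRxvz i, sub_zero]
  have hΨv : ∀ i, ∀ d ∈ suppT (Ψ i), d ≠ v i → idxLt L (v i) d := by
    intro i d hd hne
    have hdc : MvPowerSeries.coeff d.1 (xMon (v i) d.2 - Rx i d.2) ≠ 0 := hd
    rw [map_sub, hxMc] at hdc
    have hx0 : (if d.2 = (v i).2 ∧ d.1 = (v i).1 then (1 : K) else 0) = 0 :=
      if_neg fun hc => hne (Prod.ext hc.2 hc.1)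
    rw [hx0, zero_sub, neg_ne_zero] at hdc
    have hnlt : ¬ idxLt L d (v i) :=
      hxμ i (v i) (hxmin i) d (show d ∈ suppT (Rx i) from hdc) 
    rcases idxLt_trichotomy L (v i) d with h | h | h
    · exact h
    · exact absurd h.symm hne
    · exact absurd h hnlt
  -- every element of the span has coefficients in S⁻¹A
  have hspanB : ∀ Gs : Fin p → MvPowerSeries (Fin n) K,
      inSpanP (locMem S) Mimg Gs → coeffsInT (locMem S) Gs := by
    rintro Gs ⟨k, c, m, hc, hm, hGs⟩ j α
    show locMem S (MvPowerSeries.coeff α (Gs j))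
    rw [hGs j, map_sum]
    refine locMem_sum _ _ fun l _ => ?_
    rw [MvPowerSeries.coeff_mul]
    refine locMem_sum _ _ fun βγ _ => locMem_mul (hc l _) ?_
    have hml := hm l
    rw [hMimg] at hml
    obtain ⟨Fm, hFM, hFeq⟩ := hml
    have hcoe : MvPowerSeries.coeff βγ.2 (m l j) =
        algebraMap A K (MvPowerSeries.coeff βγ.2 (Fm j)) := by
      rw [← MvPowerSeries.coeff_map]
      exact (congrArg (MvPowerSeries.coeff βγ.2) (congrFun hFeq j)).symm
    rw [hcoe]
    exact locMem_algebraMap _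
  -- elements of the span supported in Δ vanish
  have hzero : ∀ Gz : Fin p → MvPowerSeries (Fin n) K,
      inSpanP (locMem S) Mimg Gz → suppT Gz ⊆ DeltaC v → ∀ j, Gz j = 0 := by
    intro Gz hspan hsupp j
    by_contra hne
    have hex : (suppT Gz).Nonempty := by
      obtain ⟨α, hα⟩ : ∃ α, MvPowerSeries.coeff α (Gz j) ≠ 0 := by
        by_contra h
        push_neg at h
        exact hne (MvPowerSeries.ext fun α => by rw [h α, map_zero])
      exact ⟨(α, j), hα⟩
    obtain ⟨e, heS, hemin⟩ := exists_min hL hex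
    rw [hMimg] at hspan
    have hed : e ∈ diagram L M := exp_mem_diagram hL hspan heS hemin
    have hcone := diagram_subset_cones hL hvert hed
    exact hsupp heS hcone
  -- Ψ i lies in the span
  have hΨspan : ∀ i, inSpanP (locMem S) Mimg (Ψ i) :=
    fun i => ⟨q, Qx i, ΘK, (hQxB i).1, hΘKmem, hΨeq i⟩
  -- combinations of the Ψ lie in the span
  have hcomb : ∀ c : Fin q → MvPowerSeries (Fin n) K,
      (∀ i, coeffsIn (locMem S) (c i)) →
      inSpanP (locMem S) Mimg (fun j => ∑ i, c i * Ψ i j) := by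
    intro c hc
    exact inSpanP_sum Finset.univ (fun i => fun j => c i * Ψ i j)
      (fun i _ => inSpanP_smul hBmul hB0 hBadd (hΨspan i) (c i) (hc i))
  refine ⟨Ψ, ⟨hΨspan, ?_⟩, ?_, ?_⟩
  · -- Ψ i = xMon (v i) + R with supp R ⊆ Δ
    intro i
    refine ⟨fun j => -(Rx i j), ?_, ?_⟩
    · intro d hd
      have : MvPowerSeries.coeff d.1 (Rx i d.2) ≠ 0 := by
        have hd' : MvPowerSeries.coeff d.1 (-(Rx i d.2)) ≠ 0 := hd
        rwa [map_neg, neg_ne_zero] at hd'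
      exact hRxsupp i this
    · funext j
      show Ψ i j = xMon (v i) j + -(Rx i j)
      rw [hΨ]
      ring
  · -- generation
    intro G
    constructor
    · intro hG
      obtain ⟨c, R2, hQ2supp, hR2supp, hEq2, hP2, hμ2⟩ :=
        division_exists hL hΨv (fun _ => (1 : K)) (fun i => (hΨu i).symm)
          (fun i => one_ne_zero) G
      have hGB : coeffsInT (locMem S) G := hspanB G hG
      have hc2B := hP2 (locMem S) hB0 hB1 hBadd hBmul hBneg
        (fun i => by rw [inv_one]; exact hB1) hΨB hGB
      have hR2span : inSpanP (locMem S) Mimg (fun j => R2 j) := by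
        have h1 := hcomb c hc2B.1
        have h2 := inSpanP_add hG (inSpanP_neg hBneg h1)
        refine inSpanP_congr (fun j => ?_) h2
        show R2 j = G j + -(∑ i, c i * Ψ i j)
        rw [hEq2 j]
        ring
      have hR2z : ∀ j, R2 j = 0 := by
        have := hzero (fun j => R2 j) hR2span ?_
        · exact this
        · intro d hd
          exact hR2supp hd
      refine ⟨c, hc2B.1, fun j => ?_⟩
      rw [hEq2 j, hR2z j, add_zero]
    · rintro ⟨c, hcB, hGc⟩
      exact inSpanP_congr hGc (hcomb c hcB)
  · -- uniqueness
    rintro Ψ' ⟨hΨ'span, hΨ'form⟩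
    funext i
    have hD : inSpanP (locMem S) Mimg (fun j => Ψ' i j + -(Ψ i j)) :=
      inSpanP_add (hΨ'span i) (inSpanP_neg hBneg (hΨspan i))
    have hDsupp : suppT (fun j => Ψ' i j + -(Ψ i j)) ⊆ DeltaC v := by
      intro d hd
      obtain ⟨R', hR'supp, hΨ'eq⟩ := hΨ'form i
      by_contra hdc
      apply hd
      show MvPowerSeries.coeff d.1 (Ψ' i d.2 + -(Ψ i d.2)) = 0
      have h1 : MvPowerSeries.coeff d.1 (R' d.2) = 0 := by
        by_contra h
        exact hdc (hR'supp (show d ∈ suppT R' from h))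
      have h2 : MvPowerSeries.coeff d.1 (Rx i d.2) = 0 := by
        by_contra h
        exact hdc (hRxsupp i (show d ∈ suppT (Rx i) from h))
      have hΨ'c : Ψ' i d.2 = xMon (v i) d.2 + R' d.2 := by rw [hΨ'eq]; rfl
      have hΨc : Ψ i d.2 = xMon (v i) d.2 - Rx i d.2 := by rw [hΨ]
      rw [hΨ'c, hΨc]
      rw [map_add, map_add, map_neg, map_sub, h1, h2]
      ring
    have hDz := hzero _ hD hDsupp
    funext j
    have := hDz j
    have h' : Ψ' i j - Ψ i j = 0 := by rw [sub_eq_add_neg]; exact this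
    exact sub_eq_zero.mp h'

end QDiv
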